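/- arXiv:2511.13037 — 3 statements merged into one kernel-verified Lean document; each statement's English description precedes it below -/
import Mathlib

section
/- Let m ≥ 1, fix i ∈ {1,…,m}, let D_1,…,D_m be positive reals, let z be a real number, and let c, f : (0,∞) → ℝ be functions such that f is differentiable with f′(A) = −c(A) for every A > 0. Define π(A) = t₂(A)·(A+D_i)²·A·exp(f(A)). Then π is positive and differentiable on (0,∞), and for every A > 0, π′(A)/π(A) = l_i(A) − (1/2)·[ (B_i(A)/2 − 2)·(1/A) + 4·t₃(A)/t₂(A) ] − c(A) − z²·B_i(A)/(4A). (This is the verification, in Theorem 2 of the paper, that the matching prior π_i(A) ∝ tr[V^{−2}](A+D_i)²·A·exp{−∫((y_i−x_i′β̄)/(A+D_i))² dA} solves the probability-matching differential equation ρ₁ = d/dA log π(A).) -/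
/-!
The prior is a product of four nonvanishing differentiable factors, so its logarithmic derivative
is the sum of theirs: `-2 t₃/t₂` for `t₂`, `2/(A + Dᵢ)` for `(A + Dᵢ)²`, `1/A` for `A` and
`f' = -c` for `exp ∘ f`. On the other side the `z²`-terms of `lᵢ` and of the last summand cancel,
and what remains is the same expression.
-/

open Finset

theorem HasDerivAt.logDeriv_eq {𝕜 𝕜' : Type*} [NontriviallyNormedField 𝕜]
    [NontriviallyNormedField 𝕜'] [NormedAlgebra 𝕜 𝕜'] {f : 𝕜 → 𝕜'} {f' : 𝕜'} {x : 𝕜}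
    (h : HasDerivAt f f' x) : logDeriv f x = f' / f x := by
  rw [logDeriv_apply, h.deriv]

theorem logDeriv_add_const_pow {𝕜 : Type*} [NontriviallyNormedField 𝕜] (a x : 𝕜) (n : ℕ) :
    logDeriv (fun y ↦ (y + a) ^ n) x = n / (x + a) := by
  rw [logDeriv_fun_pow (by fun_prop), ((hasDerivAt_id' x).add_const a).logDeriv_eq, mul_one_div]

theorem hasDerivAt_sum_inv_add_sq {𝕜 ι : Type*} [NontriviallyNormedField 𝕜] (s : Finset ι)
    (D : ι → 𝕜) {x : 𝕜} (hx : ∀ u ∈ s, x + D u ≠ 0) :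
    HasDerivAt (fun y ↦ ∑ u ∈ s, ((y + D u) ^ 2)⁻¹) (-2 * ∑ u ∈ s, ((x + D u) ^ 3)⁻¹) x := by
  rw [mul_sum]
  refine HasDerivAt.fun_sum fun u hu ↦ ?_
  have hxu := hx u hu
  refine ((((hasDerivAt_id' x).add_const (D u)).fun_pow 2).fun_inv (by simpa)).congr_deriv ?_
  field_simp
  ring

theorem Real.logDeriv_exp_comp {f : ℝ → ℝ} {f' x : ℝ} (h : HasDerivAt f f' x) :
    logDeriv (fun y ↦ exp (f y)) x = f' := by
  rw [h.exp.logDeriv_eq, mul_div_cancel_left₀ _ (exp_pos _).ne']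

theorem matching_rhs_eq (a d t₂ t₃ c z : ℝ) (ha : a ≠ 0) (had : a + d ≠ 0) :
    (2 / (a + d) + (1 + z ^ 2) * d / (4 * a * (a + d)))
        - (1 / 2) * ((d / (a + d) / 2 - 2) * (1 / a) + 4 * t₃ / t₂)
        - c - z ^ 2 * (d / (a + d)) / (4 * a) =
      2 / (a + d) + 1 / a - 2 * t₃ / t₂ - c := by
  field_simp
  ring

theorem matching_prior_solves_ode_general
    (m : ℕ) (D : Fin m → ℝ) (hD : ∀ u, 0 < D u) (i : Fin m)
    (z : ℝ) (c f : ℝ → ℝ)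
    (hf : ∀ A : ℝ, 0 < A → HasDerivAt f (-(c A)) A)
    (pr : ℝ → ℝ)
    (hpr : ∀ A : ℝ, pr A =
      (∑ u : Fin m, ((A + D u) ^ 2)⁻¹) * (A + D i) ^ 2 * A * Real.exp (f A)) :
    ∀ A : ℝ, 0 < A →
      0 < pr A ∧ DifferentiableAt ℝ pr A ∧
      deriv pr A / pr A =
        (2 / (A + D i) + (1 + z ^ 2) * D i / (4 * A * (A + D i)))
          - (1 / 2) * (((D i / (A + D i)) / 2 - 2) * (1 / A)
              + 4 * (∑ u : Fin m, ((A + D u) ^ 3)⁻¹)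
                  / (∑ u : Fin m, ((A + D u) ^ 2)⁻¹))
          - c A
          - z ^ 2 * (D i / (A + D i)) / (4 * A) := by
  intro A hA
  have hAD : ∀ u, 0 < A + D u := fun u ↦ add_pos hA (hD u)
  have hADi := hAD i
  have ht₂ : 0 < ∑ u : Fin m, ((A + D u) ^ 2)⁻¹ :=
    sum_pos (fun u _ ↦ by have := hAD u; positivity) ⟨i, mem_univ i⟩
  have hd_t₂ := hasDerivAt_sum_inv_add_sq univ D fun u _ ↦ (hAD u).ne'
  have hdt₂ := hd_t₂.differentiableAt
  have hd_exp := (hf A hA).exp.differentiableAt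
  obtain rfl : pr = _ := funext hpr
  refine ⟨by positivity, by fun_prop, ?_⟩
  rw [← logDeriv_apply, logDeriv_mul, logDeriv_mul, logDeriv_mul, hd_t₂.logDeriv_eq,
    logDeriv_add_const_pow, logDeriv_id', Real.logDeriv_exp_comp (hf A hA),
    matching_rhs_eq _ _ _ _ _ _ hA.ne' hADi.ne']
  · push_cast
    ring
  all_goals first | positivity | fun_prop

/-- Verification that the matching prior
`pr(A) = tr[V⁻²]·(A+Dᵢ)²·A·exp(f(A))` (with `f' = -c`) solves the
probability-matching differential equation of Theorem 2 of the paper. -/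
theorem matching_prior_solves_ode
    (m : ℕ) (hm : 1 ≤ m) (D : Fin m → ℝ) (hD : ∀ u, 0 < D u) (i : Fin m)
    (z : ℝ) (c f : ℝ → ℝ)
    (hf : ∀ A : ℝ, 0 < A → HasDerivAt f (-(c A)) A)
    (pr : ℝ → ℝ)
    (hpr : ∀ A : ℝ, pr A =
      (∑ u : Fin m, ((A + D u) ^ 2)⁻¹) * (A + D i) ^ 2 * A * Real.exp (f A)) :
    ∀ A : ℝ, 0 < A →
      0 < pr A ∧ DifferentiableAt ℝ pr A ∧
      deriv pr A / pr A =
        (2 / (A + D i) + (1 + z ^ 2) * D i / (4 * A * (A + D i)))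
          - (1 / 2) * (((D i / (A + D i)) / 2 - 2) * (1 / A)
              + 4 * (∑ u : Fin m, ((A + D u) ^ 3)⁻¹)
                  / (∑ u : Fin m, ((A + D u) ^ 2)⁻¹))
          - c A
          - z ^ 2 * (D i / (A + D i)) / (4 * A) :=
  matching_prior_solves_ode_general m D hD i z c f hf pr hpr
end

section
/- Let m and p be natural numbers with m > p + 4, let X be a real m×p matrix of rank p, let D_1,…,D_m be positive reals, fix i ∈ {1,…,m}, let y ∈ ℝ^m, and let f : (0,∞) → ℝ be a measurable function with f(A) ≤ 0 for all A > 0. For A > 0 set V(A) = diag(A+D_1,…,A+D_m), M(A) = Xᵀ V(A)^{−1} X (which is positive definite, hence invertible), and P(A) = V(A)^{−1} − V(A)^{−1} X M(A)^{−1} Xᵀ V(A)^{−1}. Then ∫_0^∞ t₂(A)·(A+D_i)²·A·exp(f(A))·det(V(A))^{−1/2}·det(M(A))^{−1/2}·exp(−(1/2)·yᵀ P(A) y) dA < ∞. (This is Theorem 3 of the paper: the matching prior π_i(A) ∝ tr[V^{−2}](A+D_i)²·A·e^{f(A)} yields a proper posterior under the residual maximum likelihood whenever m > p + 4.) -/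
/-!
For `A > 0` both exponential factors are at most `1`: `e^{f(A)}` because `f ≤ 0`, and
`exp(-yᵀPy/2)` because `P = W - WX(XᵀWX)⁻¹XᵀW` (with `W = V⁻¹`) is positive semidefinite,
being `(1 - GW)ᵀ W (1 - GW)` for the `W`-orthogonal projection `GW` onto the columns of `X`.
If `a ≤ D_u ≤ K a` then, with `x = A + a`, the prior is at most `m K² x` and `det V ≥ x^m`.
Since `V⁻¹ ≥ (K x)⁻¹ · 1` in the Loewner order and the determinant is Loewner-monotone,
`det(XᵀV⁻¹X) ≥ (K x)^{-p} det(XᵀX)`. So the integrand is `O(x^{1 - (m - p)/2})`, which is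
integrable on `(0, ∞)` because `m > p + 4`.
-/

open Finset Matrix MeasureTheory Set Real

namespace Matrix

theorem mulVec_injective_of_rank_eq {ι κ K : Type*} [Fintype κ] [Field K] {X : Matrix ι κ K}
    (hX : X.rank = Fintype.card κ) : Function.Injective X.mulVec := by
  have h := X.mulVecLin.finrank_range_add_finrank_ker
  rw [Module.finrank_fintype_fun_eq_card] at h
  rw [Matrix.rank] at hX
  have hker : Module.finrank K (LinearMap.ker X.mulVecLin) = 0 := by omega
  exact LinearMap.ker_eq_bot.mp (Submodule.finrank_eq_zero.mp hker)

variable {ι κ : Type*} [Fintype ι] [Fintype κ] [DecidableEq κ]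

theorem PosSemidef.one_le_det_one_add {S : Matrix κ κ ℝ} (hS : S.PosSemidef) :
    1 ≤ (1 + S).det := by
  have hS' : IsSelfAdjoint S := hS.1
  have h : cfc (fun x : ℝ => 1 + x) S = 1 + S := by
    rw [cfc_const_add (1 : ℝ) (fun x => x) S, cfc_id' ℝ S, map_one]
  rw [← h, hS.1.cfc_eq]
  simp [IsHermitian.cfc, -Unitary.conjStarAlgAut_apply]
  exact one_le_prod fun i _ => le_add_of_nonneg_right (hS.eigenvalues_nonneg i)

open scoped MatrixOrder in
theorem PosSemidef.det_le_det_add {N Δ : Matrix κ κ ℝ} (hN : N.PosSemidef)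
    (hΔ : Δ.PosSemidef) : N.det ≤ (N + Δ).det := by
  rcases eq_or_ne N.det 0 with h0 | h0
  · exact h0 ▸ (hN.add hΔ).det_nonneg
  set T := CFC.sqrt N
  have hT : T * T = N := CFC.sqrt_mul_sqrt_self N hN.nonneg
  have hTdet : IsUnit T.det := by
    rw [← hT, det_mul] at h0
    exact (left_ne_zero_of_mul h0).isUnit
  have hTinv : T⁻¹.IsHermitian := (nonneg_iff_posSemidef.mp (CFC.sqrt_nonneg N)).1.inv
  have hS : (T⁻¹ * Δ * T⁻¹).PosSemidef := by
    have := hΔ.conjTranspose_mul_mul_same T⁻¹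
    rwa [hTinv.eq] at this
  have hsplit : N + Δ = T * (1 + T⁻¹ * Δ * T⁻¹) * T := by
    simp only [Matrix.mul_add, Matrix.add_mul, Matrix.mul_one, hT, ← Matrix.mul_assoc,
      mul_nonsing_inv _ hTdet, Matrix.one_mul]
    rw [Matrix.mul_assoc Δ, nonsing_inv_mul _ hTdet, Matrix.mul_one]
  calc N.det = N.det * 1 := (mul_one _).symm
    _ ≤ N.det * (1 + T⁻¹ * Δ * T⁻¹).det :=
      mul_le_mul_of_nonneg_left hS.one_le_det_one_add hN.det_nonneg
    _ = (N + Δ).det := by rw [hsplit, det_mul, det_mul, ← hT, det_mul]; ring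

theorem pow_card_mul_det_transpose_mul_self_le [DecidableEq ι] (X : Matrix ι κ ℝ)
    {W : Matrix ι ι ℝ} {c : ℝ} (hc : 0 ≤ c) (hW : (W - c • 1).PosSemidef) :
    c ^ Fintype.card κ * (Xᵀ * X).det ≤ (Xᵀ * W * X).det := by
  have hsplit : Xᵀ * W * X = c • (Xᵀ * X) + Xᵀ * (W - c • 1) * X := by
    simp only [Matrix.mul_sub, Matrix.sub_mul, Matrix.mul_smul, Matrix.smul_mul,
      Matrix.mul_one]
    abel
  rw [hsplit, ← det_smul]
  refine PosSemidef.det_le_det_add ?_ ?_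
  · simpa using (posSemidef_conjTranspose_mul_self X).smul hc
  · simpa using hW.conjTranspose_mul_mul_same X

open scoped ComplexOrder in
theorem PosSemidef.sub_mul_inv_mul [DecidableEq ι] {𝕜 : Type*} [RCLike 𝕜] {W : Matrix ι ι 𝕜}
    (hW : W.PosSemidef) (X : Matrix ι κ 𝕜) (hM : IsUnit (Xᴴ * W * X).det) :
    (W - W * X * (Xᴴ * W * X)⁻¹ * Xᴴ * W).PosSemidef := by
  set G := X * (Xᴴ * W * X)⁻¹ * Xᴴ
  have hG : Gᴴ = G := by
    simp [G, conjTranspose_nonsing_inv, hW.1.eq, Matrix.mul_assoc]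
  have hGWG : G * W * G = G :=
    calc G * W * G = X * ((Xᴴ * W * X)⁻¹ * (Xᴴ * W * X) * (Xᴴ * W * X)⁻¹) * Xᴴ := by
          simp only [G, Matrix.mul_assoc]
      _ = G := by rw [nonsing_inv_mul _ hM, Matrix.one_mul]
  have hfactor : W - W * X * (Xᴴ * W * X)⁻¹ * Xᴴ * W = (1 - G * W)ᴴ * W * (1 - G * W) := by
    rw [conjTranspose_sub, conjTranspose_one, conjTranspose_mul, hG, hW.1.eq]
    calc W - W * X * (Xᴴ * W * X)⁻¹ * Xᴴ * W = W - W * G * W := by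
          simp only [G, Matrix.mul_assoc]
      _ = W - W * G * W - W * G * W + W * (G * W * G) * W := by rw [hGWG]; noncomm_ring
      _ = (1 - W * G) * W * (1 - G * W) := by noncomm_ring
  rw [hfactor]
  exact hW.conjTranspose_mul_mul_same _

end Matrix

theorem ContinuousAt.matrix_inv {α 𝕜 n : Type*} [TopologicalSpace α] [NormedField 𝕜]
    [Fintype n] [DecidableEq n] {F : α → Matrix n n 𝕜} {x : α} (hF : ContinuousAt F x)
    (hx : (F x).det ≠ 0) : ContinuousAt (fun t => (F t)⁻¹) x :=
  (continuousAt_matrix_inv _ (by rw [Ring.inverse_eq_inv']; exact continuousAt_inv₀ hx)).comp hF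

theorem integrableOn_Ioi_add_rpow {c s : ℝ} (hc : 0 < c) (hs : s < -1) :
    IntegrableOn (fun x : ℝ => (x + c) ^ s) (Ioi 0) := by
  have h := integrableOn_Ioi_rpow_of_lt hs hc
  rw [← (measurePreserving_add_right volume c).integrableOn_comp_preimage
    (measurableEmbedding_addRight c)] at h
  simpa [Function.comp_def] using h

theorem sum_inv_sq_mul_sq_le {ι : Type*} [Fintype ι] {d : ι → ℝ} {K : ℝ} {i : ι}
    (hd : ∀ u, 0 < d u) (hK : ∀ u, d i ≤ K * d u) :
    (∑ u, (d u ^ 2)⁻¹) * d i ^ 2 ≤ Fintype.card ι * K ^ 2 := by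
  rw [sum_mul]
  calc ∑ u, (d u ^ 2)⁻¹ * d i ^ 2 ≤ ∑ _u : ι, K ^ 2 := by
        refine sum_le_sum fun u _ => ?_
        rw [inv_mul_le_iff₀ (pow_pos (hd u) 2), mul_comm (d u ^ 2), ← mul_pow]
        exact pow_le_pow_left₀ (hd i).le (hK u) 2
    _ = Fintype.card ι * K ^ 2 := by simp

section REML

variable {ι κ : Type*} [Fintype ι] [DecidableEq ι] [Fintype κ] [DecidableEq κ]

noncomputable def matchingPrior (D : ι → ℝ) (i : ι) (f : ℝ → ℝ) (A : ℝ) : ℝ :=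
  (∑ u, ((A + D u) ^ 2)⁻¹) * (A + D i) ^ 2 * A * exp (f A)

/-- The residual likelihood of `y ~ N(Xβ, V)`, up to a constant factor. -/
noncomputable def remlLikelihood (X : Matrix ι κ ℝ) (y : ι → ℝ) (V : Matrix ι ι ℝ) : ℝ :=
  V.det ^ (-(1 : ℝ) / 2) * (Xᵀ * V⁻¹ * X).det ^ (-(1 : ℝ) / 2) *
    exp (-(1 / 2) * (y ⬝ᵥ (V⁻¹ - V⁻¹ * X * (Xᵀ * V⁻¹ * X)⁻¹ * Xᵀ * V⁻¹) *ᵥ y))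

variable {X : Matrix ι κ ℝ} {y : ι → ℝ}

theorem remlLikelihood_nonneg {V : Matrix ι ι ℝ} (hV : V.PosDef) : 0 ≤ remlLikelihood X y V := by
  have hM : (Xᵀ * V⁻¹ * X).PosSemidef := by
    simpa using hV.inv.posSemidef.conjTranspose_mul_mul_same X
  unfold remlLikelihood
  have := hV.det_pos.le
  have := hM.det_nonneg
  positivity

theorem remlLikelihood_le (hX : Function.Injective X.mulVec) {V : Matrix ι ι ℝ} (hV : V.PosDef) :
    remlLikelihood X y V ≤ V.det ^ (-(1 : ℝ) / 2) * (Xᵀ * V⁻¹ * X).det ^ (-(1 : ℝ) / 2) := by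
  have hM : (Xᵀ * V⁻¹ * X).PosDef := by
    simpa using hV.inv.conjTranspose_mul_mul_same hX
  have hP := hV.inv.posSemidef.sub_mul_inv_mul X (by simpa using hM.det_pos.ne'.isUnit)
  rw [conjTranspose_eq_transpose_of_trivial] at hP
  have hq := hP.dotProduct_mulVec_nonneg y
  rw [star_trivial] at hq
  unfold remlLikelihood
  refine mul_le_of_le_one_right ?_ (exp_le_one_iff.mpr (by linarith))
  have := hV.det_pos.le
  have := hM.det_pos.le
  positivity

theorem remlLikelihood_diagonal_le [Nonempty ι] (hX : Function.Injective X.mulVec) {d : ι → ℝ}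
    {lo hi : ℝ} (hlo : 0 < lo) (hd : ∀ u, lo ≤ d u ∧ d u ≤ hi) :
    remlLikelihood X y (diagonal d) ≤
      (lo ^ Fintype.card ι) ^ (-(1 : ℝ) / 2) *
        ((hi ^ Fintype.card κ)⁻¹ * (Xᵀ * X).det) ^ (-(1 : ℝ) / 2) := by
  have hdpos : ∀ u, 0 < d u := fun u => hlo.trans_le (hd u).1
  have hV : (diagonal d).PosDef := posDef_diagonal_iff.mpr hdpos
  have hhi : 0 < hi := (hdpos (Classical.arbitrary ι)).trans_le (hd _).2
  have hδ : 0 < (Xᵀ * X).det := by simpa using (PosDef.conjTranspose_mul_self X hX).det_pos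
  have hW : (diagonal d)⁻¹ = diagonal d⁻¹ :=
    inv_eq_left_inv (by simp [diagonal_mul_diagonal, inv_mul_cancel₀ (hdpos _).ne'])
  refine (remlLikelihood_le hX hV).trans
    (mul_le_mul_of_nonneg ?_ ?_ (rpow_nonneg hV.det_pos.le _) (by positivity))
  · refine rpow_le_rpow_of_nonpos (by positivity) ?_ (by norm_num)
    calc lo ^ Fintype.card ι = ∏ _u : ι, lo := by rw [prod_const, card_univ]
      _ ≤ (diagonal d).det := by
        rw [det_diagonal]
        exact prod_le_prod (fun _ _ => hlo.le) fun u _ => (hd u).1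
  · refine rpow_le_rpow_of_nonpos (by positivity) ?_ (by norm_num)
    rw [← inv_pow, hW]
    refine pow_card_mul_det_transpose_mul_self_le X (inv_nonneg.mpr hhi.le) ?_
    rw [smul_one_eq_diagonal, diagonal_sub, posSemidef_diagonal_iff]
    exact fun u => sub_nonneg.mpr (inv_anti₀ (hdpos u) (hd u).2)

theorem continuousAt_remlLikelihood (hX : Function.Injective X.mulVec) {V : ℝ → Matrix ι ι ℝ}
    {x : ℝ} (hV : ContinuousAt V x) (hVx : (V x).PosDef) :
    ContinuousAt (fun A => remlLikelihood X y (V A)) x := by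
  have hW : ContinuousAt (fun A => (V A)⁻¹) x := hV.matrix_inv hVx.det_pos.ne'
  have hMx : (Xᵀ * (V x)⁻¹ * X).PosDef := by
    simpa using hVx.inv.conjTranspose_mul_mul_same hX
  have hM : ContinuousAt (fun A => Xᵀ * (V A)⁻¹ * X) x := by fun_prop
  have hMinv := hM.matrix_inv hMx.det_pos.ne'
  unfold remlLikelihood
  refine ContinuousAt.mul (ContinuousAt.mul ?_ ?_) ?_
  · exact (continuous_id.matrix_det.continuousAt.comp hV).rpow_const (Or.inl hVx.det_pos.ne')
  · exact (continuous_id.matrix_det.continuousAt.comp hM).rpow_const (Or.inl hMx.det_pos.ne')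
  · fun_prop

theorem matchingPrior_mul_remlLikelihood_le (hX : Function.Injective X.mulVec) {D : ι → ℝ}
    {a K : ℝ} (ha : 0 < a) (hK : 1 ≤ K) (hD : ∀ u, a ≤ D u ∧ D u ≤ K * a) (i : ι)
    {f : ℝ → ℝ} {A : ℝ} (hA : 0 ≤ A) (hfA : f A ≤ 0) :
    matchingPrior D i f A * remlLikelihood X y (diagonal fun u => A + D u) ≤
      Fintype.card ι * K ^ 2 * K ^ ((Fintype.card κ : ℝ) / 2) * (Xᵀ * X).det ^ (-(1 : ℝ) / 2) *
        (A + a) ^ (1 - ((Fintype.card ι : ℝ) - Fintype.card κ) / 2) := by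
  have : Nonempty ι := ⟨i⟩
  set x := A + a
  have hx : 0 < x := by positivity
  have hd : ∀ u, x ≤ A + D u ∧ A + D u ≤ K * x := fun u =>
    ⟨by linarith [(hD u).1], by nlinarith [(hD u).2]⟩
  have hδ : 0 < (Xᵀ * X).det := by simpa using (PosDef.conjTranspose_mul_self X hX).det_pos
  have hprior : matchingPrior D i f A ≤ Fintype.card ι * K ^ 2 * x * 1 := by
    have h := sum_inv_sq_mul_sq_le (d := fun u => A + D u) (i := i)
      (fun u => hx.trans_le (hd u).1)
      (fun u => (hd i).2.trans (mul_le_mul_of_nonneg_left (hd u).1 (by linarith)))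
    unfold matchingPrior
    gcongr ?_ * ?_ * ?_
    · linarith
    · exact exp_le_one_iff.mpr hfA
  have hL := remlLikelihood_diagonal_le (y := y) hX hx hd
  calc _ ≤ (Fintype.card ι * K ^ 2 * x * 1) * ((x ^ Fintype.card ι) ^ (-(1 : ℝ) / 2) *
        (((K * x) ^ Fintype.card κ)⁻¹ * (Xᵀ * X).det) ^ (-(1 : ℝ) / 2)) :=
      mul_le_mul hprior hL (remlLikelihood_nonneg (posDef_diagonal_iff.mpr fun u =>
        hx.trans_le (hd u).1)) (by positivity)
    _ = _ := by
      rw [mul_rpow (by positivity) hδ.le, inv_rpow (by positivity), ← rpow_neg (by positivity),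
        ← rpow_natCast x, ← rpow_natCast (K * x), ← rpow_mul hx.le, ← rpow_mul (by positivity),
        mul_rpow (by positivity) hx.le,
        show (Fintype.card κ : ℝ) * -(-1 / 2) = Fintype.card κ / 2 by ring,
        show 1 - ((Fintype.card ι : ℝ) - Fintype.card κ) / 2 =
          1 + Fintype.card ι * (-1 / 2) + Fintype.card κ / 2 by ring,
        rpow_add hx, rpow_add hx, rpow_one]
      ring

theorem integrableOn_matchingPrior_mul_remlLikelihood (hX : Function.Injective X.mulVec)
    (hdim : Fintype.card κ + 4 < Fintype.card ι) {D : ι → ℝ} (hD : ∀ u, 0 < D u) (i : ι)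
    {f : ℝ → ℝ} (hfm : Measurable f) (hf : ∀ A, 0 < A → f A ≤ 0) :
    IntegrableOn (fun A => matchingPrior D i f A * remlLikelihood X y (diagonal fun u => A + D u))
      (Ioi 0) := by
  have : Nonempty ι := ⟨i⟩
  obtain ⟨u₀, hu₀⟩ := Finite.exists_min D
  obtain ⟨u₁, hu₁⟩ := Finite.exists_max D
  set K := D u₁ / D u₀
  have hK : 1 ≤ K := (one_le_div (hD u₀)).mpr (hu₀ u₁)
  have hDK : ∀ u, D u₀ ≤ D u ∧ D u ≤ K * D u₀ := fun u =>
    ⟨hu₀ u, by rw [div_mul_cancel₀ _ (hD u₀).ne']; exact hu₁ u⟩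
  have hs : 1 - ((Fintype.card ι : ℝ) - Fintype.card κ) / 2 < -1 := by
    have : (Fintype.card κ : ℝ) + 4 < Fintype.card ι := by exact_mod_cast hdim
    linarith
  have hV : ∀ A ∈ Ioi (0 : ℝ), (diagonal fun u => A + D u).PosDef := fun A (hA : 0 < A) =>
    posDef_diagonal_iff.mpr fun u => add_pos hA (hD u)
  refine ((integrableOn_Ioi_add_rpow (hD u₀) hs).const_mul (Fintype.card ι * K ^ 2 *
    K ^ ((Fintype.card κ : ℝ) / 2) * (Xᵀ * X).det ^ (-(1 : ℝ) / 2))).mono' ?_ ?_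
  · have hprior : Measurable (matchingPrior D i f) := by unfold matchingPrior; fun_prop
    exact hprior.aestronglyMeasurable.mul <| ContinuousOn.aestronglyMeasurable
      (fun A hA => (continuousAt_remlLikelihood hX (by fun_prop) (hV A hA)).continuousWithinAt)
      measurableSet_Ioi
  · filter_upwards [ae_restrict_mem measurableSet_Ioi] with A (hA : 0 < A)
    have hprior : 0 ≤ matchingPrior D i f A := by unfold matchingPrior; positivity
    rw [norm_of_nonneg (mul_nonneg hprior (remlLikelihood_nonneg (hV A hA)))]
    exact matchingPrior_mul_remlLikelihood_le hX (hD u₀) hK hDK i hA.le (hf A hA)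

end REML

/-- Theorem 3 of the paper. The matching prior
`tr[V⁻²]·(A+Dᵢ)²·A·e^{f(A)}` yields a proper posterior under the residual
(REML) likelihood whenever `m > p + 4`. -/
theorem matching_prior_propriety
    (m p : ℕ) (hm : m > p + 4)
    (X : Matrix (Fin m) (Fin p) ℝ) (hX : X.rank = p)
    (D : Fin m → ℝ) (hD : ∀ u, 0 < D u) (i : Fin m)
    (y : Fin m → ℝ)
    (f : ℝ → ℝ) (hfmeas : Measurable f) (hf : ∀ A : ℝ, 0 < A → f A ≤ 0)
    (V : ℝ → Matrix (Fin m) (Fin m) ℝ)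
    (hV : ∀ A : ℝ, V A = Matrix.diagonal (fun j => A + D j))
    (M : ℝ → Matrix (Fin p) (Fin p) ℝ)
    (hM : ∀ A : ℝ, M A = Xᵀ * (V A)⁻¹ * X)
    (P : ℝ → Matrix (Fin m) (Fin m) ℝ)
    (hP : ∀ A : ℝ, P A = (V A)⁻¹ - (V A)⁻¹ * X * (M A)⁻¹ * Xᵀ * (V A)⁻¹) :
    IntegrableOn
      (fun A : ℝ =>
        (∑ u : Fin m, ((A + D u) ^ 2)⁻¹) * (A + D i) ^ 2 * A * Real.exp (f A)
          * ((V A).det) ^ (-(1 : ℝ) / 2) * ((M A).det) ^ (-(1 : ℝ) / 2)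
          * Real.exp (-(1 / 2) * (y ⬝ᵥ (P A).mulVec y)))
      (Set.Ioi (0 : ℝ)) := by
  have hXinj := mulVec_injective_of_rank_eq (X := X) (by simpa using hX)
  refine (integrableOn_matchingPrior_mul_remlLikelihood (y := y) hXinj (by simpa using hm) hD i
    hfmeas hf).congr_fun (fun A _ => ?_) measurableSet_Ioi
  simp only [matchingPrior, remlLikelihood, hP, hM, hV]
  ring
end

section
/- Let m and p be natural numbers with m > p + 4, let D > 0, let c be a real number, and let S ≥ 0. Then ∫_0^∞ A·exp(c²/(A+D))·(A+D)^{−(m−p)/2}·exp(−S/(2(A+D))) dA < ∞. (This is the propriety claim of Corollary 1 of the paper: in the balanced case D_i = D for all i, the matching prior π_{i;bal}(A) ∝ A·exp{(y_i − x_i′β̂_ols)²/(A+D)} yields a proper posterior whenever m > p + 4; here c = y_i − x_i′β̂_ols and S = yᵀ(I − X(XᵀX)^{−1}Xᵀ)y is the residual sum of squares.) -/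
open MeasureTheory

lemma aux_shift_rpow (D : ℝ) (hD : 0 < D) (r : ℝ) (hr : r < -1) :
    IntegrableOn (fun A : ℝ => (A + D) ^ r) (Set.Ioi (0 : ℝ)) := by
  have h1 : IntegrableOn (fun x : ℝ => x ^ r) (Set.Ioi D) :=
    integrableOn_Ioi_rpow_of_lt hr hD
  have hpre : (fun A : ℝ => A + D) ⁻¹' Set.Ioi D = Set.Ioi (0 : ℝ) := by
    ext x; simp
  have hmp := (measurePreserving_add_right (volume : Measure ℝ) D).restrict_preimage
    (s := Set.Ioi D) measurableSet_Ioi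
  rw [hpre] at hmp
  exact (hmp.integrable_comp h1.aestronglyMeasurable).2 h1

/-- propriety claim of Corollary 1 of the paper, balanced
case. The matching prior `A·exp(c²/(A+D))` yields a proper posterior under
the balanced REML likelihood `(A+D)^{-(m-p)/2}·exp(-S/(2(A+D)))` whenever
`m > p + 4`. -/
theorem balanced_matching_prior_propriety
    (m p : ℕ) (hm : m > p + 4) (D : ℝ) (hD : 0 < D) (c S : ℝ) (hS : 0 ≤ S) :
    IntegrableOn
      (fun A : ℝ =>
        A * Real.exp (c ^ 2 / (A + D))
          * (A + D) ^ (-(((m : ℝ) - (p : ℝ)) / 2))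
          * Real.exp (-S / (2 * (A + D))))
      (Set.Ioi (0 : ℝ)) := by
  set r : ℝ := -(((m : ℝ) - (p : ℝ)) / 2) with hr_def
  have hmp : (4 : ℝ) < (m : ℝ) - (p : ℝ) := by
    have : (p : ℝ) + 4 < (m : ℝ) := by exact_mod_cast hm
    linarith
  have hr1 : r + 1 < -1 := by
    rw [hr_def]; linarith
  have hg : IntegrableOn (fun A : ℝ => Real.exp (c ^ 2 / D) * (A + D) ^ (r + 1))
      (Set.Ioi (0 : ℝ)) :=
    (aux_shift_rpow D hD (r + 1) hr1).smul (Real.exp (c ^ 2 / D))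
  refine Integrable.mono' hg ?_ ?_
  · -- a.e. strong measurability
    apply ContinuousOn.aestronglyMeasurable _ measurableSet_Ioi
    intro A hA
    have hAD : (0 : ℝ) < A + D := by
      have : (0 : ℝ) < A := hA
      linarith
    have h1 : ContinuousWithinAt (fun A : ℝ => A + D) (Set.Ioi 0) A :=
      (continuous_id.add continuous_const).continuousWithinAt
    have hne : A + D ≠ 0 := ne_of_gt hAD
    exact (((continuousWithinAt_id.mul
        ((Real.continuous_exp.continuousAt.comp_continuousWithinAt
          ((continuousWithinAt_const.div h1 hne))))).mul
        (h1.rpow_const (Or.inl hne))).mul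
        ((Real.continuous_exp.continuousAt.comp_continuousWithinAt
          ((continuousWithinAt_const.div (continuousWithinAt_const.mul h1)
            (by positivity))))))
  · filter_upwards [ae_restrict_mem measurableSet_Ioi] with A hA
    have hA0 : (0 : ℝ) < A := hA
    have hAD : (0 : ℝ) < A + D := by linarith
    have hDAD : D ≤ A + D := by linarith
    have e1 : Real.exp (c ^ 2 / (A + D)) ≤ Real.exp (c ^ 2 / D) := by
      apply Real.exp_le_exp.2
      exact div_le_div_of_nonneg_left (by positivity) hD hDAD
    have e2 : Real.exp (-S / (2 * (A + D))) ≤ 1 := by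
      apply Real.exp_le_one_iff.2
      apply div_nonpos_of_nonpos_of_nonneg (by linarith) (by positivity)
    have hnn : 0 ≤ A * Real.exp (c ^ 2 / (A + D)) * (A + D) ^ r
        * Real.exp (-S / (2 * (A + D))) := by positivity
    rw [Real.norm_of_nonneg hnn]
    have hrsplit : (A + D) ^ (r + 1) = (A + D) ^ r * (A + D) := by
      rw [Real.rpow_add hAD, Real.rpow_one]
    rw [hrsplit]
    calc A * Real.exp (c ^ 2 / (A + D)) * (A + D) ^ r * Real.exp (-S / (2 * (A + D)))
        ≤ A * Real.exp (c ^ 2 / (A + D)) * (A + D) ^ r * 1 := by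
          apply mul_le_mul_of_nonneg_left e2 (by positivity)
      _ = A * Real.exp (c ^ 2 / (A + D)) * (A + D) ^ r := by ring
      _ ≤ (A + D) * Real.exp (c ^ 2 / D) * (A + D) ^ r := by
          apply mul_le_mul_of_nonneg_right _ (by positivity)
          exact mul_le_mul (by linarith) e1 (by positivity) (by positivity)
      _ = Real.exp (c ^ 2 / D) * ((A + D) ^ r * (A + D)) := by ring
end
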